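/- Let G = (V,E) be a connected finite simple graph with |V| ≥ 3, let G' be the bipartite construction of G, and let k ≥ 1. Then the k-subdivision S_k(G') admits a fixed point free involution if and only if G admits a fixed point free involution. -/
import Mathlib


/-- The bipartite construction: vertex set `V ⊕ (E × {1,2})`; `u ∈ V` is adjacent to
`(e, i)` iff `u` is an endpoint of the edge `e`, and there are no other edges. -/
def bipartiteConstruction {V : Type} (G : SimpleGraph V) :
    SimpleGraph (V ⊕ (G.edgeSet × Bool)) :=
  SimpleGraph.fromRel (fun x y =>
    ∃ (u : V) (e : G.edgeSet) (i : Bool),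
      x = Sum.inl u ∧ y = Sum.inr (e, i) ∧ u ∈ (e : Sym2 V))
/-- The `k`-subdivision of a graph `H`: each edge of `H` is replaced by a path with `k`
internal vertices.  A linear order on the vertices is used to pick, for each edge, which
endpoint is attached to the internal vertex of index `0` (any choice gives the same graph
up to isomorphism). -/
def kSubdivision {W : Type} (L : LinearOrder W) (k : ℕ) (H : SimpleGraph W) :
    SimpleGraph (W ⊕ (H.edgeSet × Fin k)) :=
  letI := L
  SimpleGraph.fromRel (fun x y =>
    (∃ (e : H.edgeSet) (j : Fin k),
       x = Sum.inl (Sym2.inf (e : Sym2 W)) ∧ y = Sum.inr (e, j) ∧ (j : ℕ) = 0) ∨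
    (∃ (e : H.edgeSet) (j : Fin k),
       x = Sum.inl (Sym2.sup (e : Sym2 W)) ∧ y = Sum.inr (e, j) ∧ (j : ℕ) = k - 1) ∨
    (∃ (e : H.edgeSet) (i j : Fin k),
       x = Sum.inr (e, i) ∧ y = Sum.inr (e, j) ∧ (i : ℕ) + 1 = (j : ℕ)))
/-- A graph has a fixed point free involution if some automorphism of order dividing two
maps no vertex to itself. -/
def HasFPFInv {W : Type} (H : SimpleGraph W) : Prop :=
  ∃ φ : H ≃g H, (∀ v, φ (φ v) = v) ∧ ∀ v, φ v ≠ v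
namespace FPF19
open SimpleGraph Sum

lemma sym2_inf_sup {W : Type} [LinearOrder W] (a b : W) :
    ((s(a,b) : Sym2 W).inf = a ∧ (s(a,b) : Sym2 W).sup = b) ∨
    ((s(a,b) : Sym2 W).inf = b ∧ (s(a,b) : Sym2 W).sup = a) := by
  rcases le_total a b with h | h
  · left; simp [Sym2.inf_mk, Sym2.sup_mk, inf_eq_left.mpr h, sup_eq_right.mpr h]
  · right; simp [Sym2.inf_mk, Sym2.sup_mk, inf_eq_right.mpr h, sup_eq_left.mpr h]

section
variable {V : Type} {G : SimpleGraph V}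

lemma bc_adj {x y : V ⊕ (G.edgeSet × Bool)} :
    (bipartiteConstruction G).Adj x y ↔
      ∃ (u : V) (e : G.edgeSet) (i : Bool), u ∈ (e : Sym2 V) ∧
        ((x = inl u ∧ y = inr (e,i)) ∨ (x = inr (e,i) ∧ y = inl u)) := by
  simp only [bipartiteConstruction, fromRel_adj]
  constructor
  · rintro ⟨hne, ⟨u,e,i,h1,h2,h3⟩ | ⟨u,e,i,h1,h2,h3⟩⟩
    · exact ⟨u,e,i,h3, Or.inl ⟨h1,h2⟩⟩
    · exact ⟨u,e,i,h3, Or.inr ⟨h2,h1⟩⟩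
  · rintro ⟨u,e,i,hm, ⟨rfl,rfl⟩ | ⟨rfl,rfl⟩⟩
    · exact ⟨by simp, Or.inl ⟨u,e,i,rfl,rfl,hm⟩⟩
    · exact ⟨by simp, Or.inr ⟨u,e,i,rfl,rfl,hm⟩⟩

lemma bc_adj' {u : V} {e : G.edgeSet} {i : Bool} :
    (bipartiteConstruction G).Adj (inl u) (inr (e,i)) ↔ u ∈ (e : Sym2 V) := by
  rw [bc_adj]
  constructor
  · rintro ⟨u',e',i',hm, ⟨h1,h2⟩ | ⟨h1,h2⟩⟩
    · obtain rfl : u = u' := inl_injective h1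
      obtain ⟨rfl, rfl⟩ : e = e' ∧ i = i' := by
        have := inr_injective h2; exact ⟨congrArg Prod.fst this, congrArg Prod.snd this⟩
      exact hm
    · exact absurd h1 (by simp)
  · exact fun hm => ⟨u,e,i,hm, Or.inl ⟨rfl, rfl⟩⟩


lemma bc_edge_eq {u u' : V} {e e' : G.edgeSet} {i i' : Bool}
    (h : (s(Sum.inl u, Sum.inr (e,i)) : Sym2 (V ⊕ (G.edgeSet × Bool))) = s(Sum.inl u', Sum.inr (e',i'))) :
    u = u' ∧ e = e' ∧ i = i' := by
  rw [Sym2.eq_iff] at h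
  rcases h with ⟨h1, h2⟩ | ⟨h1, h2⟩
  · have h1' := inl_injective h1
    have h2' := inr_injective h2
    exact ⟨h1', congrArg Prod.fst h2', congrArg Prod.snd h2'⟩
  · exact absurd h1 (by simp)

lemma exists_bc_edge (f : (bipartiteConstruction G).edgeSet) :
    ∃ (u : V) (e : G.edgeSet) (i : Bool), u ∈ (e : Sym2 V) ∧
      (f : Sym2 (V ⊕ (G.edgeSet × Bool))) = s(Sum.inl u, Sum.inr (e,i)) := by
  obtain ⟨z, hz⟩ := f
  induction z using Sym2.ind with
  | _ x y =>
    rw [SimpleGraph.mem_edgeSet] at hz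
    rcases bc_adj.mp hz with ⟨u,e,i,hm, ⟨rfl,rfl⟩ | ⟨rfl,rfl⟩⟩
    · exact ⟨u,e,i,hm, rfl⟩
    · exact ⟨u,e,i,hm, Sym2.eq_swap⟩

/-- the `V`-endpoint of an edge of the bipartite construction -/
noncomputable def uf (f : (bipartiteConstruction G).edgeSet) : V :=
  (exists_bc_edge f).choose

noncomputable def ef (f : (bipartiteConstruction G).edgeSet) : G.edgeSet :=
  (exists_bc_edge f).choose_spec.choose

noncomputable def bf (f : (bipartiteConstruction G).edgeSet) : Bool :=
  (exists_bc_edge f).choose_spec.choose_spec.choose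

lemma uf_mem (f : (bipartiteConstruction G).edgeSet) : uf f ∈ (ef f : Sym2 V) :=
  (exists_bc_edge f).choose_spec.choose_spec.choose_spec.1

lemma f_eq (f : (bipartiteConstruction G).edgeSet) :
    (f : Sym2 (V ⊕ (G.edgeSet × Bool))) = s(Sum.inl (uf f), Sum.inr (ef f, bf f)) :=
  (exists_bc_edge f).choose_spec.choose_spec.choose_spec.2

lemma eq_uf {f : (bipartiteConstruction G).edgeSet} {u : V} {e : G.edgeSet} {i : Bool}
    (h : (f : Sym2 (V ⊕ (G.edgeSet × Bool))) = s(Sum.inl u, Sum.inr (e,i))) :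
    u = uf f ∧ e = ef f ∧ i = bf f :=
  bc_edge_eq (h.symm.trans (f_eq f))


variable [L : LinearOrder (V ⊕ (G.edgeSet × Bool))] {k : ℕ}

/-- the base relation of the subdivision -/
def KRel (k : ℕ) (x y : (V ⊕ (G.edgeSet × Bool)) ⊕ ((bipartiteConstruction G).edgeSet × Fin k)) :
    Prop :=
  (∃ (f : (bipartiteConstruction G).edgeSet) (j : Fin k),
     x = Sum.inl (Sym2.inf (f : Sym2 (V ⊕ (G.edgeSet × Bool)))) ∧ y = Sum.inr (f, j) ∧ (j : ℕ) = 0) ∨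
  (∃ (f : (bipartiteConstruction G).edgeSet) (j : Fin k),
     x = Sum.inl (Sym2.sup (f : Sym2 (V ⊕ (G.edgeSet × Bool)))) ∧ y = Sum.inr (f, j) ∧ (j : ℕ) = k - 1) ∨
  (∃ (f : (bipartiteConstruction G).edgeSet) (i j : Fin k),
     x = Sum.inr (f, i) ∧ y = Sum.inr (f, j) ∧ (i : ℕ) + 1 = (j : ℕ))

lemma ks_adj {x y : (V ⊕ (G.edgeSet × Bool)) ⊕ ((bipartiteConstruction G).edgeSet × Fin k)} :
    (kSubdivision L k (bipartiteConstruction G)).Adj x y ↔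
      x ≠ y ∧ (KRel k x y ∨ KRel k y x) := by
  rw [kSubdivision, SimpleGraph.fromRel_adj]
  rfl


/-- which side of the linear order the `V`-endpoint of `f` is on -/
def Side (f : (bipartiteConstruction G).edgeSet) : Prop :=
  Sym2.inf (f : Sym2 (V ⊕ (G.edgeSet × Bool))) = Sum.inl (uf f)

lemma side_cases (f : (bipartiteConstruction G).edgeSet) :
    (Side f ∧ Sym2.sup (f : Sym2 (V ⊕ (G.edgeSet × Bool))) = Sum.inr (ef f, bf f)) ∨
    (¬ Side f ∧ Sym2.inf (f : Sym2 (V ⊕ (G.edgeSet × Bool))) = Sum.inr (ef f, bf f) ∧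
      Sym2.sup (f : Sym2 (V ⊕ (G.edgeSet × Bool))) = Sum.inl (uf f)) := by
  have h := sym2_inf_sup (Sum.inl (uf f) : V ⊕ (G.edgeSet × Bool)) (Sum.inr (ef f, bf f))
  rw [← f_eq f] at h
  rcases h with ⟨h1, h2⟩ | ⟨h1, h2⟩
  · exact Or.inl ⟨h1, h2⟩
  · refine Or.inr ⟨?_, h1, h2⟩
    rw [Side, h1]; simp

lemma side_sup {f : (bipartiteConstruction G).edgeSet} (h : Side f) :
    Sym2.sup (f : Sym2 (V ⊕ (G.edgeSet × Bool))) = Sum.inr (ef f, bf f) := by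
  rcases side_cases f with ⟨_, h2⟩ | ⟨hn, _, _⟩
  · exact h2
  · exact absurd h hn

lemma not_side {f : (bipartiteConstruction G).edgeSet} (h : ¬ Side f) :
    Sym2.inf (f : Sym2 (V ⊕ (G.edgeSet × Bool))) = Sum.inr (ef f, bf f) ∧
    Sym2.sup (f : Sym2 (V ⊕ (G.edgeSet × Bool))) = Sum.inl (uf f) := by
  rcases side_cases f with ⟨h1, _⟩ | ⟨_, h1, h2⟩
  · exact absurd h1 h
  · exact ⟨h1, h2⟩

open Classical in
/-- distance of internal vertex `(f,j)` from the `V`-endpoint of `f`, in `[1,k]` -/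
noncomputable def pos (f : (bipartiteConstruction G).edgeSet) (j : Fin k) : ℕ :=
  if Side f then (j : ℕ) + 1 else k - (j : ℕ)

lemma pos_pos (f : (bipartiteConstruction G).edgeSet) (j : Fin k) : 1 ≤ pos f j := by
  have := j.isLt; rw [pos]; split_ifs <;> omega

lemma pos_le (f : (bipartiteConstruction G).edgeSet) (j : Fin k) : pos f j ≤ k := by
  have := j.isLt; rw [pos]; split_ifs <;> omega

lemma pos_side {f : (bipartiteConstruction G).edgeSet} {j : Fin k} (h : Side f) :
    pos f j = (j : ℕ) + 1 := by rw [pos, if_pos h]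

lemma pos_not_side {f : (bipartiteConstruction G).edgeSet} {j : Fin k} (h : ¬ Side f) :
    pos f j = k - (j : ℕ) := by rw [pos, if_neg h]

lemma adj_of_mem_edge {e : G.edgeSet} {a b : V} (ha : a ∈ (e : Sym2 V))
    (hb : b ∈ (e : Sym2 V)) (hne : a ≠ b) : G.Adj a b := by
  have h := (Sym2.mem_and_mem_iff hne).mp ⟨ha, hb⟩
  have he := e.prop
  rw [h] at he
  exact he

open Classical in
/-- truncated distance potential from the vertex `u` -/
noncomputable def gpot (u : V) :
    (V ⊕ (G.edgeSet × Bool)) ⊕ ((bipartiteConstruction G).edgeSet × Fin k) → ℕ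
  | Sum.inl (Sum.inl w) => if w = u then 0 else if G.Adj u w then 2*k+2 else 2*k+3
  | Sum.inl (Sum.inr (e,_)) => if u ∈ (e : Sym2 V) then k+1 else 2*k+3
  | Sum.inr (f,j) =>
      if uf f = u then pos f j
      else if u ∈ ((ef f : G.edgeSet) : Sym2 V) then 2*k+2 - pos f j else 2*k+3


lemma walk_bound {X' : Type} {S' : SimpleGraph X'} (F : X' → ℕ)
    (hF : ∀ x y, S'.Adj x y → F y ≤ F x + 1) :
    ∀ {x y : X'} (w : S'.Walk x y), F y ≤ F x + w.length := by
  intro x y w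
  induction w with
  | nil => simp
  | @cons a b c h p ih =>
      have h1 := hF _ _ h
      rw [SimpleGraph.Walk.length_cons]
      omega

lemma gpot_A_C (u : V) (f : (bipartiteConstruction G).edgeSet) (j : Fin k) (hp : pos f j = 1) :
    (gpot u (Sum.inr (f,j)) ≤
       gpot u (Sum.inl (Sum.inl (uf f)) :
         (V ⊕ (G.edgeSet × Bool)) ⊕ ((bipartiteConstruction G).edgeSet × Fin k)) + 1 ∧
     gpot u (Sum.inl (Sum.inl (uf f)) :
         (V ⊕ (G.edgeSet × Bool)) ⊕ ((bipartiteConstruction G).edgeSet × Fin k)) ≤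
       gpot u (Sum.inr (f,j)) + 1) := by
  simp only [gpot]
  by_cases h1 : uf f = u
  · simp only [if_pos h1, hp]; omega
  · simp only [if_neg h1]
    by_cases h2 : u ∈ ((ef f : G.edgeSet) : Sym2 V)
    · have hadj : G.Adj u (uf f) := adj_of_mem_edge h2 (uf_mem f) (fun he => h1 he.symm)
      simp only [if_pos h2, if_pos hadj, hp]; omega
    · simp only [if_neg h2]
      by_cases h3 : G.Adj u (uf f)
      · simp only [if_pos h3]; omega
      · simp only [if_neg h3]; omega

lemma gpot_B_C (u : V) (f : (bipartiteConstruction G).edgeSet) (j : Fin k) (hp : pos f j = k) :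
    (gpot u (Sum.inr (f,j)) ≤
       gpot u (Sum.inl (Sum.inr (ef f, bf f)) :
         (V ⊕ (G.edgeSet × Bool)) ⊕ ((bipartiteConstruction G).edgeSet × Fin k)) + 1 ∧
     gpot u (Sum.inl (Sum.inr (ef f, bf f)) :
         (V ⊕ (G.edgeSet × Bool)) ⊕ ((bipartiteConstruction G).edgeSet × Fin k)) ≤
       gpot u (Sum.inr (f,j)) + 1) := by
  have hk : 1 ≤ k := le_trans (pos_pos f j) (pos_le f j)
  simp only [gpot]
  by_cases h2 : u ∈ ((ef f : G.edgeSet) : Sym2 V)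
  · simp only [if_pos h2]
    by_cases h1 : uf f = u
    · simp only [if_pos h1, hp]; omega
    · simp only [if_neg h1, if_pos h2, hp]; omega
  · have h1 : ¬ (uf f = u) := fun he => h2 (he ▸ uf_mem f)
    simp only [if_neg h2, if_neg h1]; omega

lemma gpot_C_C (u : V) (f : (bipartiteConstruction G).edgeSet) (i j : Fin k)
    (hp : pos f i + 1 = pos f j) :
    (gpot u (Sum.inr (f,j)) ≤ gpot u (Sum.inr (f,i)) + 1 ∧
     gpot u (Sum.inr (f,i)) ≤ gpot u (Sum.inr (f,j)) + 1) := by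
  have hi1 := pos_pos f i; have hi2 := pos_le f i
  have hj1 := pos_pos f j; have hj2 := pos_le f j
  simp only [gpot]
  by_cases h1 : uf f = u
  · simp only [if_pos h1]; omega
  · simp only [if_neg h1]
    by_cases h2 : u ∈ ((ef f : G.edgeSet) : Sym2 V)
    · simp only [if_pos h2]; omega
    · simp only [if_neg h2]; omega

lemma gpot_lip (u : V) :
    ∀ x y, (kSubdivision L k (bipartiteConstruction G)).Adj x y →
      gpot u y ≤ gpot u x + 1 := by
  have main : ∀ x y : (V ⊕ (G.edgeSet × Bool)) ⊕ ((bipartiteConstruction G).edgeSet × Fin k),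
      KRel k x y → (gpot u y ≤ gpot u x + 1 ∧ gpot u x ≤ gpot u y + 1) := by
    rintro x y (⟨f,j,rfl,rfl,hj⟩ | ⟨f,j,rfl,rfl,hj⟩ | ⟨f,i,j,rfl,rfl,hj⟩)
    · by_cases hs : Side f
      · rw [hs]
        exact gpot_A_C u f j (by rw [pos_side hs, hj])
      · rw [(not_side hs).1]
        have hp : pos f j = k := by rw [pos_not_side hs]; omega
        exact gpot_B_C u f j hp
    · by_cases hs : Side f
      · rw [side_sup hs]
        have hkk : 1 ≤ k := Nat.one_le_iff_ne_zero.mpr (by rintro rfl; exact j.elim0)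
        exact gpot_B_C u f j (by rw [pos_side hs, hj]; omega)
      · rw [(not_side hs).2]
        have hkk : 1 ≤ k := Nat.one_le_iff_ne_zero.mpr (by rintro rfl; exact j.elim0)
        exact gpot_A_C u f j (by rw [pos_not_side hs, hj]; omega)
    · have hjk := j.isLt
      by_cases hs : Side f
      · exact gpot_C_C u f i j (by rw [pos_side hs, pos_side hs]; omega)
      · have h := gpot_C_C u f j i (by rw [pos_not_side hs, pos_not_side hs]; omega)
        exact ⟨h.2, h.1⟩
  intro x y h
  rcases ks_adj.mp h with ⟨hne, hR | hR⟩
  · exact (main x y hR).1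
  · exact (main y x hR).2


lemma pos_inj {f : (bipartiteConstruction G).edgeSet} {i j : Fin k}
    (h : pos f i = pos f j) : i = j := by
  have hi := i.isLt; have hj := j.isLt
  rw [pos, pos] at h
  split_ifs at h <;> (apply Fin.ext; omega)

lemma adj_of_krel {x y : (V ⊕ (G.edgeSet × Bool)) ⊕ ((bipartiteConstruction G).edgeSet × Fin k)}
    (hne : x ≠ y) (h : KRel k x y) :
    (kSubdivision L k (bipartiteConstruction G)).Adj x y := ks_adj.mpr ⟨hne, Or.inl h⟩

lemma adj_of_krel' {x y : (V ⊕ (G.edgeSet × Bool)) ⊕ ((bipartiteConstruction G).edgeSet × Fin k)}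
    (hne : x ≠ y) (h : KRel k y x) :
    (kSubdivision L k (bipartiteConstruction G)).Adj x y := ks_adj.mpr ⟨hne, Or.inr h⟩

lemma inr_ne {f f' : (bipartiteConstruction G).edgeSet} {i j : Fin k} (h : (i:ℕ) ≠ (j:ℕ)) :
    (Sum.inr (f,i) : (V ⊕ (G.edgeSet × Bool)) ⊕ ((bipartiteConstruction G).edgeSet × Fin k)) ≠
      Sum.inr (f',j) := by
  intro hc
  have := Sum.inr_injective hc
  have : i = j := congrArg Prod.snd this
  exact h (congrArg Fin.val this)

lemma step_up {f : (bipartiteConstruction G).edgeSet} {j : Fin k} (h : pos f j < k) :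
    ∃ j' : Fin k, pos f j' = pos f j + 1 ∧
      (kSubdivision L k (bipartiteConstruction G)).Adj (Sum.inr (f,j)) (Sum.inr (f,j')) := by
  have hj := j.isLt
  by_cases hs : Side f
  · rw [pos_side hs] at h ⊢
    refine ⟨⟨(j:ℕ)+1, by omega⟩, by rw [pos_side hs], ?_⟩
    refine adj_of_krel (inr_ne (by simp)) (Or.inr (Or.inr ⟨f, j, _, rfl, rfl, rfl⟩))
  · rw [pos_not_side hs] at h ⊢
    have h1 : 1 ≤ (j:ℕ) := by omega
    refine ⟨⟨(j:ℕ)-1, by omega⟩, by rw [pos_not_side hs]; simp; omega, ?_⟩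
    refine adj_of_krel' (inr_ne (by simp; omega))
      (Or.inr (Or.inr ⟨f, ⟨(j:ℕ)-1, by omega⟩, j, rfl, rfl, by simp; omega⟩))

lemma step_down {f : (bipartiteConstruction G).edgeSet} {j : Fin k} (h : 1 < pos f j) :
    ∃ j' : Fin k, pos f j' + 1 = pos f j ∧
      (kSubdivision L k (bipartiteConstruction G)).Adj (Sum.inr (f,j)) (Sum.inr (f,j')) := by
  have hj := j.isLt
  by_cases hs : Side f
  · rw [pos_side hs] at h ⊢
    have h1 : 1 ≤ (j:ℕ) := by omega
    refine ⟨⟨(j:ℕ)-1, by omega⟩, by rw [pos_side hs]; simp; omega, ?_⟩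
    refine adj_of_krel' (inr_ne (by simp; omega))
      (Or.inr (Or.inr ⟨f, ⟨(j:ℕ)-1, by omega⟩, j, rfl, rfl, by simp; omega⟩))
  · rw [pos_not_side hs] at h ⊢
    refine ⟨⟨(j:ℕ)+1, by omega⟩, by rw [pos_not_side hs]; simp; omega, ?_⟩
    refine adj_of_krel (inr_ne (by simp))
      (Or.inr (Or.inr ⟨f, j, ⟨(j:ℕ)+1, by omega⟩, rfl, rfl, by simp⟩))

lemma adj_mid {f : (bipartiteConstruction G).edgeSet} {j : Fin k} (h : pos f j = k) :
    (kSubdivision L k (bipartiteConstruction G)).Adj (Sum.inr (f,j))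
      (Sum.inl (Sum.inr (ef f, bf f))) := by
  have hj := j.isLt
  by_cases hs : Side f
  · rw [pos_side hs] at h
    refine adj_of_krel' (by simp) (Or.inr (Or.inl ⟨f, j, ?_, rfl, by omega⟩))
    rw [side_sup hs]
  · rw [pos_not_side hs] at h
    refine adj_of_krel' (by simp) (Or.inl ⟨f, j, ?_, rfl, by omega⟩)
    rw [(not_side hs).1]

lemma adj_ufv {f : (bipartiteConstruction G).edgeSet} {j : Fin k} (h : pos f j = 1) :
    (kSubdivision L k (bipartiteConstruction G)).Adj (Sum.inr (f,j))
      (Sum.inl (Sum.inl (uf f))) := by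
  have hj := j.isLt
  by_cases hs : Side f
  · rw [pos_side hs] at h
    refine adj_of_krel' (by simp) (Or.inl ⟨f, j, ?_, rfl, by omega⟩)
    rw [hs]
  · rw [pos_not_side hs] at h
    refine adj_of_krel' (by simp) (Or.inr (Or.inl ⟨f, j, ?_, rfl, by omega⟩))
    rw [(not_side hs).2]

lemma walk_to_mid (f : (bipartiteConstruction G).edgeSet) :
    ∀ (n : ℕ) (j : Fin k), k - pos f j = n →
    ∃ w : (kSubdivision L k (bipartiteConstruction G)).Walk (Sum.inr (f,j))
        (Sum.inl (Sum.inr (ef f, bf f))), w.length = k + 1 - pos f j := by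
  intro n
  induction n with
  | zero =>
      intro j hn
      have hp : pos f j = k := by have := pos_le f j; omega
      exact ⟨SimpleGraph.Walk.cons (adj_mid hp) SimpleGraph.Walk.nil, by simp [hp]⟩
  | succ n ih =>
      intro j hn
      have hlt : pos f j < k := by omega
      obtain ⟨j', hp', hadj⟩ := step_up (f := f) hlt
      obtain ⟨w, hw⟩ := ih j' (by omega)
      refine ⟨SimpleGraph.Walk.cons hadj w, ?_⟩
      rw [SimpleGraph.Walk.length_cons, hw]
      have := pos_pos f j
      omega

lemma walk_to_uf (f : (bipartiteConstruction G).edgeSet) :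
    ∀ (n : ℕ) (j : Fin k), pos f j = n + 1 →
    ∃ w : (kSubdivision L k (bipartiteConstruction G)).Walk (Sum.inr (f,j))
        (Sum.inl (Sum.inl (uf f))), w.length = pos f j := by
  intro n
  induction n with
  | zero =>
      intro j hn
      exact ⟨SimpleGraph.Walk.cons (adj_ufv hn) SimpleGraph.Walk.nil, by simp [hn]⟩
  | succ n ih =>
      intro j hn
      obtain ⟨j', hp', hadj⟩ := step_down (f := f) (j := j) (by omega)
      obtain ⟨w, hw⟩ := ih j' (by omega)
      refine ⟨SimpleGraph.Walk.cons hadj w, ?_⟩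
      rw [SimpleGraph.Walk.length_cons, hw]
      omega

lemma exists_pos_one (hk : 1 ≤ k) (f : (bipartiteConstruction G).edgeSet) :
    ∃ j : Fin k, pos f j = 1 := by
  by_cases hs : Side f
  · exact ⟨⟨0, hk⟩, by rw [pos_side hs]⟩
  · exact ⟨⟨k-1, by omega⟩, by rw [pos_not_side hs]; simp; omega⟩

lemma walk_uf_mid (hk : 1 ≤ k) (f : (bipartiteConstruction G).edgeSet) :
    ∃ w : (kSubdivision L k (bipartiteConstruction G)).Walk (Sum.inl (Sum.inl (uf f)))
      (Sum.inl (Sum.inr (ef f, bf f))), w.length = k + 1 := by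
  obtain ⟨j, hj⟩ := exists_pos_one hk f
  obtain ⟨w, hw⟩ := walk_to_mid f (k - pos f j) j rfl
  refine ⟨SimpleGraph.Walk.cons (adj_ufv hj).symm w, ?_⟩
  rw [SimpleGraph.Walk.length_cons, hw, hj]
  omega

lemma mk_edge {u : V} {e : G.edgeSet} (i : Bool) (h : u ∈ (e : Sym2 V)) :
    ∃ f : (bipartiteConstruction G).edgeSet,
      uf f = u ∧ ef f = e ∧ bf f = i ∧
      (f : Sym2 (V ⊕ (G.edgeSet × Bool))) = s(Sum.inl u, Sum.inr (e,i)) := by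
  refine ⟨⟨s(Sum.inl u, Sum.inr (e,i)), ((bipartiteConstruction G).mem_edgeSet).mpr (bc_adj'.mpr h)⟩, ?_⟩
  obtain ⟨h1, h2, h3⟩ := eq_uf (f := ⟨s(Sum.inl u, Sum.inr (e,i)), ((bipartiteConstruction G).mem_edgeSet).mpr (bc_adj'.mpr h)⟩) rfl
  exact ⟨h1.symm, h2.symm, h3.symm, rfl⟩


lemma f_ext {f1 f2 : (bipartiteConstruction G).edgeSet} (h1 : uf f1 = uf f2)
    (h2 : ef f1 = ef f2) (h3 : bf f1 = bf f2) : f1 = f2 := by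
  apply Subtype.ext
  rw [f_eq f1, f_eq f2, h1, h2, h3]

lemma sym2_rep (z : Sym2 V) : ∃ a b, z = s(a,b) := by
  induction z using Sym2.ind with
  | _ a b => exact ⟨a, b, rfl⟩

lemma nbr_of_W {w : V ⊕ (G.edgeSet × Bool)}
    {x : (V ⊕ (G.edgeSet × Bool)) ⊕ ((bipartiteConstruction G).edgeSet × Fin k)}
    (h : (kSubdivision L k (bipartiteConstruction G)).Adj x (Sum.inl w)) :
    ∃ f j, x = Sum.inr (f,j) ∧
      ((w = Sum.inl (uf f) ∧ pos f j = 1) ∨ (w = Sum.inr (ef f, bf f) ∧ pos f j = k)) := by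
  rcases ks_adj.mp h with ⟨hne, hR | hR⟩
  · rcases hR with ⟨f,j,hx,hy,hj⟩|⟨f,j,hx,hy,hj⟩|⟨f,i,j,hx,hy,hj⟩ <;> simp at hy
  · rcases hR with ⟨f,j,h1,h2,hj⟩|⟨f,j,h1,h2,hj⟩|⟨f,i,j,h1,h2,hj⟩
    · have hw : w = Sym2.inf (f : Sym2 (V ⊕ (G.edgeSet × Bool))) := Sum.inl_injective h1
      refine ⟨f, j, h2, ?_⟩
      by_cases hs : Side f
      · exact Or.inl ⟨hw.trans hs, by rw [pos_side hs, hj]⟩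
      · exact Or.inr ⟨hw.trans (not_side hs).1, by rw [pos_not_side hs]; omega⟩
    · have hw : w = Sym2.sup (f : Sym2 (V ⊕ (G.edgeSet × Bool))) := Sum.inl_injective h1
      have hjk := j.isLt
      refine ⟨f, j, h2, ?_⟩
      by_cases hs : Side f
      · exact Or.inr ⟨hw.trans (side_sup hs), by rw [pos_side hs]; omega⟩
      · exact Or.inl ⟨hw.trans (not_side hs).2, by rw [pos_not_side hs]; omega⟩
    · exact absurd h1 (by simp)

lemma nbr_of_V {u : V}
    {x : (V ⊕ (G.edgeSet × Bool)) ⊕ ((bipartiteConstruction G).edgeSet × Fin k)}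
    (h : (kSubdivision L k (bipartiteConstruction G)).Adj x (Sum.inl (Sum.inl u))) :
    ∃ f j, x = Sum.inr (f,j) ∧ uf f = u ∧ pos f j = 1 := by
  obtain ⟨f, j, hx, hc | hc⟩ := nbr_of_W h
  · exact ⟨f, j, hx, (Sum.inl_injective hc.1).symm, hc.2⟩
  · exact absurd hc.1 (by simp)

lemma nbr_of_mid {e : G.edgeSet} {i : Bool}
    {x : (V ⊕ (G.edgeSet × Bool)) ⊕ ((bipartiteConstruction G).edgeSet × Fin k)}
    (h : (kSubdivision L k (bipartiteConstruction G)).Adj x (Sum.inl (Sum.inr (e,i)))) :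
    ∃ f j, x = Sum.inr (f,j) ∧ ef f = e ∧ bf f = i ∧ pos f j = k := by
  obtain ⟨f, j, hx, hc | hc⟩ := nbr_of_W h
  · exact absurd hc.1 (by simp)
  · have := Sum.inr_injective hc.1
    exact ⟨f, j, hx, (congrArg Prod.fst this).symm, (congrArg Prod.snd this).symm, hc.2⟩

lemma pair_eq {A B : Type} {a a' : A} {b b' : B} (h : (a,b) = (a',b')) : a = a' ∧ b = b' :=
  ⟨congrArg Prod.fst h, congrArg Prod.snd h⟩

lemma nbr_of_int {f : (bipartiteConstruction G).edgeSet} {j : Fin k}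
    {x : (V ⊕ (G.edgeSet × Bool)) ⊕ ((bipartiteConstruction G).edgeSet × Fin k)}
    (h : (kSubdivision L k (bipartiteConstruction G)).Adj x (Sum.inr (f,j))) :
    (x = Sum.inl (Sum.inl (uf f)) ∧ pos f j = 1) ∨
    (x = Sum.inl (Sum.inr (ef f, bf f)) ∧ pos f j = k) ∨
    (∃ i, x = Sum.inr (f,i) ∧ (pos f i + 1 = pos f j ∨ pos f j + 1 = pos f i)) := by
  have hjk := j.isLt
  rcases ks_adj.mp h with ⟨hne, hR | hR⟩
  · rcases hR with ⟨f',j',h1,h2,hj'⟩|⟨f',j',h1,h2,hj'⟩|⟨f',i,j',h1,h2,hj'⟩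
    · obtain ⟨rfl, rfl⟩ := pair_eq (Sum.inr_injective h2)
      by_cases hs : Side f
      · rw [hs] at h1
        exact Or.inl ⟨h1, by rw [pos_side hs, hj']⟩
      · rw [(not_side hs).1] at h1
        exact Or.inr (Or.inl ⟨h1, by rw [pos_not_side hs]; omega⟩)
    · obtain ⟨rfl, rfl⟩ := pair_eq (Sum.inr_injective h2)
      by_cases hs : Side f
      · rw [side_sup hs] at h1
        exact Or.inr (Or.inl ⟨h1, by rw [pos_side hs]; omega⟩)
      · rw [(not_side hs).2] at h1
        exact Or.inl ⟨h1, by rw [pos_not_side hs]; omega⟩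
    · obtain ⟨rfl, rfl⟩ := pair_eq (Sum.inr_injective h2)
      refine Or.inr (Or.inr ⟨i, h1, ?_⟩)
      have hik := i.isLt
      by_cases hs : Side f
      · rw [pos_side hs, pos_side hs]; omega
      · rw [pos_not_side hs, pos_not_side hs]; omega
  · rcases hR with ⟨f',j',h1,h2,hj'⟩|⟨f',j',h1,h2,hj'⟩|⟨f',i,j',h1,h2,hj'⟩
    · exact absurd h1 (by simp)
    · exact absurd h1 (by simp)
    · obtain ⟨rfl, rfl⟩ := pair_eq (Sum.inr_injective h1)
      refine Or.inr (Or.inr ⟨j', h2, ?_⟩)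
      have hik := j'.isLt
      by_cases hs : Side f
      · rw [pos_side hs, pos_side hs]; omega
      · rw [pos_not_side hs, pos_not_side hs]; omega

/-- `x` has at least three distinct neighbours -/
def HasThreeNbrs {X' : Type} (S' : SimpleGraph X') (x : X') : Prop :=
  ∃ a b c, a ≠ b ∧ a ≠ c ∧ b ≠ c ∧ S'.Adj x a ∧ S'.Adj x b ∧ S'.Adj x c

noncomputable def nu (f : (bipartiteConstruction G).edgeSet) :
    (V ⊕ (G.edgeSet × Bool)) ⊕ ((bipartiteConstruction G).edgeSet × Fin k) → ℕ
  | Sum.inl (Sum.inl _) => 0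
  | Sum.inl (Sum.inr _) => k+1
  | Sum.inr (_, i) => pos f i

lemma not_three_int (f : (bipartiteConstruction G).edgeSet) (j : Fin k) :
    ¬ HasThreeNbrs (kSubdivision L k (bipartiteConstruction G)) (Sum.inr (f,j)) := by
  rintro ⟨a,b,c,hab,hac,hbc,ha,hb,hc⟩
  have det : ∀ x y, (kSubdivision L k (bipartiteConstruction G)).Adj x (Sum.inr (f,j)) →
      (kSubdivision L k (bipartiteConstruction G)).Adj y (Sum.inr (f,j)) →
      nu f x = nu f y → x = y := by
    intro x y hx hy hxy
    rcases nbr_of_int hx with ⟨rfl, hp⟩ | ⟨rfl, hp⟩ | ⟨i1, rfl, hp⟩ <;>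
      rcases nbr_of_int hy with ⟨rfl, hq⟩ | ⟨rfl, hq⟩ | ⟨i2, rfl, hq⟩ <;>
      simp only [nu] at hxy
    · rfl
    · omega
    · have := pos_pos f i2; omega
    · omega
    · rfl
    · have := pos_le f i2; omega
    · have := pos_pos f i1; omega
    · have := pos_le f i1; omega
    · rw [pos_inj hxy]
  have rng : ∀ x, (kSubdivision L k (bipartiteConstruction G)).Adj x (Sum.inr (f,j)) →
      nu f x = pos f j - 1 ∨ nu f x = pos f j + 1 := by
    intro x hx
    rcases nbr_of_int hx with ⟨rfl, hp⟩ | ⟨rfl, hp⟩ | ⟨i1, rfl, hp⟩ <;> simp only [nu] <;> omega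
  have h1 := rng a ha.symm; have h2 := rng b hb.symm; have h3 := rng c hc.symm
  have : nu f a = nu f b ∨ nu f a = nu f c ∨ nu f b = nu f c := by omega
  rcases this with h | h | h
  · exact hab (det a b ha.symm hb.symm h)
  · exact hac (det a c ha.symm hc.symm h)
  · exact hbc (det b c hb.symm hc.symm h)

lemma not_three_mid (e : G.edgeSet) (i : Bool) :
    ¬ HasThreeNbrs (kSubdivision L k (bipartiteConstruction G)) (Sum.inl (Sum.inr (e,i))) := by
  rintro ⟨a,b,c,hab,hac,hbc,ha,hb,hc⟩
  obtain ⟨fa, ja, rfl, hea, hba, hpa⟩ := nbr_of_mid ha.symm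
  obtain ⟨fb, jb, rfl, heb, hbb, hpb⟩ := nbr_of_mid hb.symm
  obtain ⟨fc, jc, rfl, hec, hbc', hpc⟩ := nbr_of_mid hc.symm
  have det : ∀ (f1 f2 : (bipartiteConstruction G).edgeSet) (j1 j2 : Fin k),
      ef f1 = e → ef f2 = e → bf f1 = i → bf f2 = i → pos f1 j1 = k → pos f2 j2 = k →
      uf f1 = uf f2 →
      (Sum.inr (f1,j1) : (V ⊕ (G.edgeSet × Bool)) ⊕ ((bipartiteConstruction G).edgeSet × Fin k))
        = Sum.inr (f2,j2) := by
    intro f1 f2 j1 j2 he1 he2 hb1 hb2 hp1 hp2 hu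
    obtain rfl : f1 = f2 := f_ext hu (he1.trans he2.symm) (hb1.trans hb2.symm)
    rw [pos_inj (hp1.trans hp2.symm)]
  obtain ⟨a', b', hab'⟩ := sym2_rep (e : Sym2 V)
  have mem : ∀ f : (bipartiteConstruction G).edgeSet, ef f = e → uf f = a' ∨ uf f = b' := by
    intro f hf
    have := uf_mem f
    rw [hf, hab', Sym2.mem_iff] at this
    exact this
  rcases mem fa hea with h1 | h1 <;> rcases mem fb heb with h2 | h2 <;>
    rcases mem fc hec with h3 | h3
  · exact hab (det fa fb ja jb hea heb hba hbb hpa hpb (h1.trans h2.symm))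
  · exact hab (det fa fb ja jb hea heb hba hbb hpa hpb (h1.trans h2.symm))
  · exact hac (det fa fc ja jc hea hec hba hbc' hpa hpc (h1.trans h3.symm))
  · exact hbc (det fb fc jb jc heb hec hbb hbc' hpb hpc (h2.trans h3.symm))
  · exact hbc (det fb fc jb jc heb hec hbb hbc' hpb hpc (h2.trans h3.symm))
  · exact hac (det fa fc ja jc hea hec hba hbc' hpa hpc (h1.trans h3.symm))
  · exact hab (det fa fb ja jb hea heb hba hbb hpa hpb (h1.trans h2.symm))
  · exact hab (det fa fb ja jb hea heb hba hbb hpa hpb (h1.trans h2.symm))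


lemma inr_ne_f {f1 f2 : (bipartiteConstruction G).edgeSet} {j1 j2 : Fin k} (h : f1 ≠ f2) :
    (Sum.inr (f1,j1) : (V ⊕ (G.edgeSet × Bool)) ⊕ ((bipartiteConstruction G).edgeSet × Fin k)) ≠
      Sum.inr (f2,j2) := by
  intro hc
  exact h (congrArg Prod.fst (Sum.inr_injective hc))

lemma hasThree_V_of (hk : 1 ≤ k) {u v1 v2 : V} (hne : v1 ≠ v2) (h1 : G.Adj u v1)
    (h2 : G.Adj u v2) :
    HasThreeNbrs (kSubdivision L k (bipartiteConstruction G)) (Sum.inl (Sum.inl u)) := by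
  have hm1 : u ∈ ((⟨s(u,v1), h1⟩ : G.edgeSet) : Sym2 V) := Sym2.mem_mk_left u v1
  have hm2 : u ∈ ((⟨s(u,v2), h2⟩ : G.edgeSet) : Sym2 V) := Sym2.mem_mk_left u v2
  obtain ⟨f1, hu1, he1, hb1, hv1⟩ := mk_edge (G := G) (e := ⟨s(u,v1), h1⟩) true hm1
  obtain ⟨f2, hu2, he2, hb2, hv2⟩ := mk_edge (G := G) (e := ⟨s(u,v1), h1⟩) false hm1
  obtain ⟨f3, hu3, he3, hb3, hv3⟩ := mk_edge (G := G) (e := ⟨s(u,v2), h2⟩) true hm2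
  obtain ⟨j1, hj1⟩ := exists_pos_one hk f1
  obtain ⟨j2, hj2⟩ := exists_pos_one hk f2
  obtain ⟨j3, hj3⟩ := exists_pos_one hk f3
  have hf12 : f1 ≠ f2 := by
    intro hc
    have := bc_edge_eq ((hv1.symm.trans (congrArg _ hc)).trans hv2)
    simp at this
  have hf13 : f1 ≠ f3 := by
    intro hc
    have := bc_edge_eq ((hv1.symm.trans (congrArg _ hc)).trans hv3)
    have he : s(u,v1) = s(u,v2) := congrArg Subtype.val this.2.1
    exact hne (Sym2.congr_right.mp he)
  have hf23 : f2 ≠ f3 := by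
    intro hc
    have := bc_edge_eq ((hv2.symm.trans (congrArg _ hc)).trans hv3)
    simp at this
  refine ⟨Sum.inr (f1,j1), Sum.inr (f2,j2), Sum.inr (f3,j3),
    inr_ne_f hf12, inr_ne_f hf13, inr_ne_f hf23, ?_, ?_, ?_⟩
  · have := (adj_ufv hj1).symm; rwa [hu1] at this
  · have := (adj_ufv hj2).symm; rwa [hu2] at this
  · have := (adj_ufv hj3).symm; rwa [hu3] at this

lemma two_nbrs_of_hasThree {x : (V ⊕ (G.edgeSet × Bool)) ⊕ ((bipartiteConstruction G).edgeSet × Fin k)}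
    (h : HasThreeNbrs (kSubdivision L k (bipartiteConstruction G)) x) :
    ∃ u, x = Sum.inl (Sum.inl u) ∧ ∃ v1 v2, v1 ≠ v2 ∧ G.Adj u v1 ∧ G.Adj u v2 := by
  match x with
  | Sum.inl (Sum.inr (e,i)) => exact absurd h (not_three_mid e i)
  | Sum.inr (f,j) => exact absurd h (not_three_int f j)
  | Sum.inl (Sum.inl u) =>
    refine ⟨u, rfl, ?_⟩
    obtain ⟨a,b,c,hab,hac,hbc,ha,hb,hc⟩ := h
    obtain ⟨fa, ja, rfl, hua, hpa⟩ := nbr_of_V ha.symm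
    obtain ⟨fb, jb, rfl, hub, hpb⟩ := nbr_of_V hb.symm
    obtain ⟨fc, jc, rfl, huc, hpc⟩ := nbr_of_V hc.symm
    have det : ∀ (g1 g2 : (bipartiteConstruction G).edgeSet) (i1 i2 : Fin k),
        uf g1 = u → uf g2 = u → pos g1 i1 = 1 → pos g2 i2 = 1 →
        ef g1 = ef g2 → bf g1 = bf g2 →
        (Sum.inr (g1,i1) : (V ⊕ (G.edgeSet × Bool)) ⊕
          ((bipartiteConstruction G).edgeSet × Fin k)) = Sum.inr (g2,i2) := by
      intro g1 g2 i1 i2 q1 q2 p1 p2 r1 r2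
      obtain rfl : g1 = g2 := f_ext (q1.trans q2.symm) r1 r2
      rw [pos_inj (p1.trans p2.symm)]
    have key : ∀ (g1 g2 : (bipartiteConstruction G).edgeSet), uf g1 = u → uf g2 = u →
        ef g1 ≠ ef g2 → ∃ v1 v2, v1 ≠ v2 ∧ G.Adj u v1 ∧ G.Adj u v2 := by
      intro g1 g2 q1 q2 hne
      have m1 : u ∈ ((ef g1 : G.edgeSet) : Sym2 V) := q1 ▸ uf_mem g1
      have m2 : u ∈ ((ef g2 : G.edgeSet) : Sym2 V) := q2 ▸ uf_mem g2
      obtain ⟨w1, hw1⟩ := Sym2.mem_iff_exists.mp m1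
      obtain ⟨w2, hw2⟩ := Sym2.mem_iff_exists.mp m2
      have a1 : G.Adj u w1 := by have := (ef g1).prop; rwa [hw1, SimpleGraph.mem_edgeSet] at this
      have a2 : G.Adj u w2 := by have := (ef g2).prop; rwa [hw2, SimpleGraph.mem_edgeSet] at this
      refine ⟨w1, w2, ?_, a1, a2⟩
      intro hc
      exact hne (Subtype.ext (by rw [hw1, hw2, hc]))
    by_cases h12 : ef fa = ef fb
    · have hbb : bf fa ≠ bf fb := by
        intro hc
        exact hab (det fa fb ja jb hua hub hpa hpb h12 hc)
      by_cases h13 : ef fa = ef fc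
      · have hbc1 : bf fa ≠ bf fc := by
          intro hc
          exact hac (det fa fc ja jc hua huc hpa hpc h13 hc)
        have hbc2 : bf fb ≠ bf fc := by
          intro hc
          exact hbc (det fb fc jb jc hub huc hpb hpc (h12.symm.trans h13) hc)
        have h3 : ∀ (x y z : Bool), x ≠ y → x ≠ z → y ≠ z → False := by decide
        exact absurd trivial (fun _ => h3 _ _ _ hbb hbc1 hbc2)
      · exact key fa fc hua huc h13
    · exact key fa fb hua hub h12

lemma exists_adj [Fintype V] (hconn : G.Connected) (hV : 3 ≤ Fintype.card V) (u : V) :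
    ∃ v, G.Adj u v := by
  obtain ⟨w, hw⟩ := Fintype.exists_ne_of_one_lt_card (by omega) u
  obtain ⟨p⟩ := hconn.preconnected u w
  cases p with
  | nil => exact absurd rfl hw
  | cons h q => exact ⟨_, h⟩

lemma closed_pair {u v : V} (hu : ∀ w, G.Adj u w → w = v) (hv : ∀ w, G.Adj v w → w = u) :
    ∀ {a b : V} (p : G.Walk a b), (a = u ∨ a = v) → (b = u ∨ b = v) := by
  intro a b p
  induction p with
  | nil => exact id
  | cons h q ih =>
      rintro (rfl | rfl)
      · exact ih (Or.inr (hu _ h))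
      · exact ih (Or.inl (hv _ h))

lemma good_endpoint [Fintype V] (hconn : G.Connected) (hV : 3 ≤ Fintype.card V) {u v : V}
    (h : G.Adj u v) (hu : ¬ ∃ v1 v2, v1 ≠ v2 ∧ G.Adj u v1 ∧ G.Adj u v2) :
    ∃ v1 v2, v1 ≠ v2 ∧ G.Adj v v1 ∧ G.Adj v v2 := by
  have hu' : ∀ w, G.Adj u w → w = v := by
    intro w hw
    by_contra hc
    exact hu ⟨w, v, hc, hw, h⟩
  by_contra hcon
  have hv' : ∀ w, G.Adj v w → w = u := by
    intro w hw
    by_contra hc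
    exact hcon ⟨w, u, hc, hw, h.symm⟩
  letI := Classical.decEq V
  obtain ⟨x, hx⟩ : ∃ x : V, x ≠ u ∧ x ≠ v := by
    by_contra hcx
    push_neg at hcx
    have hsub : (Finset.univ : Finset V) ⊆ {u, v} := by
      intro y _
      by_cases hyu : y = u
      · simp [hyu]
      · simp [hcx y hyu]
    have hc2 : ({u, v} : Finset V).card ≤ 2 := by
      apply le_trans (Finset.card_insert_le _ _)
      simp
    have := Finset.card_le_card hsub
    rw [Finset.card_univ] at this
    omega
  obtain ⟨p⟩ := hconn.preconnected u x
  rcases closed_pair hu' hv' p (Or.inl rfl) with rfl | rfl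
  · exact hx.1 rfl
  · exact hx.2 rfl


lemma gpot_self (u : V) :
    gpot (L := L) (k := k) u (Sum.inl (Sum.inl u)) = 0 := by
  simp [gpot]

lemma gpot_V {u v : V} (h : v ≠ u) :
    2*k+2 ≤ gpot (L := L) (k := k) u (Sum.inl (Sum.inl v)) := by
  simp only [gpot, if_neg h]
  split_ifs <;> omega

lemma gpot_V_nonadj {u v : V} (h : v ≠ u) (h2 : ¬ G.Adj u v) :
    gpot (L := L) (k := k) u (Sum.inl (Sum.inl v)) = 2*k+3 := by
  simp only [gpot, if_neg h, if_neg h2]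

lemma walk_ge {u v : V} (hne : v ≠ u)
    (w : (kSubdivision L k (bipartiteConstruction G)).Walk (Sum.inl (Sum.inl u))
      (Sum.inl (Sum.inl v))) : 2*k+2 ≤ w.length := by
  have hb := walk_bound (gpot u) (gpot_lip u) w
  rw [gpot_self] at hb
  have := gpot_V (L := L) (k := k) (u := u) hne
  omega

lemma walk_ge_nonadj {u v : V} (hne : v ≠ u) (hnadj : ¬ G.Adj u v)
    (w : (kSubdivision L k (bipartiteConstruction G)).Walk (Sum.inl (Sum.inl u))
      (Sum.inl (Sum.inl v))) : 2*k+3 ≤ w.length := by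
  have hb := walk_bound (gpot u) (gpot_lip u) w
  rw [gpot_self, gpot_V_nonadj hne hnadj] at hb
  omega

lemma walk_V_mid (hk : 1 ≤ k) {u : V} {e : G.edgeSet} (i : Bool) (h : u ∈ (e : Sym2 V)) :
    ∃ w : (kSubdivision L k (bipartiteConstruction G)).Walk (Sum.inl (Sum.inl u))
      (Sum.inl (Sum.inr (e,i))), w.length = k+1 := by
  obtain ⟨f, h1, h2, h3, _⟩ := mk_edge i h
  obtain ⟨w, hw⟩ := walk_uf_mid hk f
  exact ⟨w.copy (by rw [h1]) (by rw [h2, h3]), by rwa [SimpleGraph.Walk.length_copy]⟩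

lemma walk_adj (hk : 1 ≤ k) {u v : V} (h : G.Adj u v) :
    ∃ w : (kSubdivision L k (bipartiteConstruction G)).Walk (Sum.inl (Sum.inl u))
      (Sum.inl (Sum.inl v)), w.length = 2*k+2 := by
  have hm1 : u ∈ ((⟨s(u,v), h⟩ : G.edgeSet) : Sym2 V) := Sym2.mem_mk_left u v
  have hm2 : v ∈ ((⟨s(u,v), h⟩ : G.edgeSet) : Sym2 V) := Sym2.mem_mk_right u v
  obtain ⟨w1, hw1⟩ := walk_V_mid (L := L) hk true hm1
  obtain ⟨w2, hw2⟩ := walk_V_mid (L := L) hk true hm2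
  refine ⟨w1.append w2.reverse, ?_⟩
  rw [SimpleGraph.Walk.length_append, SimpleGraph.Walk.length_reverse, hw1, hw2]
  omega

lemma edge_good [Fintype V] (hconn : G.Connected) (hV : 3 ≤ Fintype.card V) (e : G.edgeSet) :
    ∃ v, v ∈ (e : Sym2 V) ∧ ∃ v1 v2, v1 ≠ v2 ∧ G.Adj v v1 ∧ G.Adj v v2 := by
  obtain ⟨a, b, hab⟩ := sym2_rep (e : Sym2 V)
  have hadj : G.Adj a b := by have := e.prop; rwa [hab, SimpleGraph.mem_edgeSet] at this
  by_cases ha : ∃ v1 v2, v1 ≠ v2 ∧ G.Adj a v1 ∧ G.Adj a v2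
  · exact ⟨a, by rw [hab]; exact Sym2.mem_mk_left a b, ha⟩
  · exact ⟨b, by rw [hab]; exact Sym2.mem_mk_right a b, good_endpoint hconn hV hadj ha⟩

/-- the invariant characterising original vertices of `G` inside the subdivision -/
def PP (x : (V ⊕ (G.edgeSet × Bool)) ⊕ ((bipartiteConstruction G).edgeSet × Fin k)) : Prop :=
  HasThreeNbrs (kSubdivision L k (bipartiteConstruction G)) x ∨
  ((∃ b, ∃ w : (kSubdivision L k (bipartiteConstruction G)).Walk x b,
      HasThreeNbrs (kSubdivision L k (bipartiteConstruction G)) b ∧ w.length = 2*k+2) ∧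
   (∀ b, ∀ w : (kSubdivision L k (bipartiteConstruction G)).Walk x b,
      HasThreeNbrs (kSubdivision L k (bipartiteConstruction G)) b → 2*k+2 ≤ w.length))

lemma PP_iff [Fintype V] (hconn : G.Connected) (hV : 3 ≤ Fintype.card V) (hk : 1 ≤ k)
    (x : (V ⊕ (G.edgeSet × Bool)) ⊕ ((bipartiteConstruction G).edgeSet × Fin k)) :
    PP (L := L) x ↔ ∃ u, x = Sum.inl (Sum.inl u) := by
  constructor
  · intro hp
    match x with
    | Sum.inl (Sum.inl u) => exact ⟨u, rfl⟩
    | Sum.inl (Sum.inr (e,i)) =>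
        exfalso
        rcases hp with h3 | ⟨_, hmin⟩
        · exact not_three_mid e i h3
        · obtain ⟨v, hv, v1, v2, hv12, ha1, ha2⟩ := edge_good hconn hV e
          obtain ⟨w1, hw1⟩ := walk_V_mid (L := L) hk i hv
          have h3 := hasThree_V_of (L := L) hk hv12 ha1 ha2
          have := hmin _ w1.reverse h3
          rw [SimpleGraph.Walk.length_reverse, hw1] at this
          omega
    | Sum.inr (f,j) =>
        exfalso
        rcases hp with h3 | ⟨_, hmin⟩
        · exact not_three_int f j h3
        · obtain ⟨v, hv, v1, v2, hv12, ha1, ha2⟩ := edge_good hconn hV (ef f)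
          obtain ⟨w1, hw1⟩ := walk_to_mid f (k - pos f j) j rfl
          obtain ⟨w2, hw2⟩ := walk_V_mid (L := L) hk (bf f) hv
          have h3 := hasThree_V_of (L := L) hk hv12 ha1 ha2
          have := hmin _ (w1.append w2.reverse) h3
          rw [SimpleGraph.Walk.length_append, SimpleGraph.Walk.length_reverse, hw1, hw2] at this
          have := pos_pos f j
          omega
  · rintro ⟨u, rfl⟩
    by_cases h2 : ∃ v1 v2, v1 ≠ v2 ∧ G.Adj u v1 ∧ G.Adj u v2
    · obtain ⟨v1, v2, hv12, ha1, ha2⟩ := h2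
      exact Or.inl (hasThree_V_of hk hv12 ha1 ha2)
    · right
      obtain ⟨v, hv⟩ := exists_adj hconn hV u
      obtain ⟨v1, v2, hv12, ha1, ha2⟩ := good_endpoint hconn hV hv h2
      constructor
      · obtain ⟨w, hw⟩ := walk_adj (L := L) hk hv
        exact ⟨_, w, hasThree_V_of hk hv12 ha1 ha2, hw⟩
      · intro b w h3
        obtain ⟨v', rfl, hv'⟩ := two_nbrs_of_hasThree h3
        have hne : v' ≠ u := by
          rintro rfl
          exact h2 hv'
        exact walk_ge hne w

lemma hasThree_map {X' : Type} {S' : SimpleGraph X'} (Ψ : S' ≃g S') {x : X'}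
    (h : HasThreeNbrs S' x) : HasThreeNbrs S' (Ψ x) := by
  obtain ⟨a,b,c,hab,hac,hbc,ha,hb,hc⟩ := h
  exact ⟨Ψ a, Ψ b, Ψ c,
    fun hh => hab (Ψ.toEquiv.injective hh),
    fun hh => hac (Ψ.toEquiv.injective hh),
    fun hh => hbc (Ψ.toEquiv.injective hh),
    Ψ.map_adj_iff.mpr ha, Ψ.map_adj_iff.mpr hb, Ψ.map_adj_iff.mpr hc⟩

lemma PP_map (Ψ : (kSubdivision L k (bipartiteConstruction G)) ≃g
      (kSubdivision L k (bipartiteConstruction G)))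
    (x : (V ⊕ (G.edgeSet × Bool)) ⊕ ((bipartiteConstruction G).edgeSet × Fin k))
    (h : PP (L := L) x) : PP (L := L) (Ψ x) := by
  rcases h with h3 | ⟨⟨b, w, h3, hl⟩, hmin⟩
  · exact Or.inl (hasThree_map Ψ h3)
  · refine Or.inr ⟨⟨Ψ b, w.map Ψ.toHom, hasThree_map Ψ h3, by
      rw [SimpleGraph.Walk.length_map, hl]⟩, ?_⟩
    intro b' w' h3'
    have hm := hmin (Ψ.symm b')
      ((w'.map Ψ.symm.toHom).copy (Ψ.symm_apply_apply x) rfl)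
      (hasThree_map Ψ.symm h3')
    rwa [SimpleGraph.Walk.length_copy, SimpleGraph.Walk.length_map] at hm


lemma forward [Fintype V] (hconn : G.Connected) (hV : 3 ≤ Fintype.card V) (hk : 1 ≤ k)
    (Φ : (kSubdivision L k (bipartiteConstruction G)) ≃g
      (kSubdivision L k (bipartiteConstruction G)))
    (hinv : ∀ x, Φ (Φ x) = x) (hfpf : ∀ x, Φ x ≠ x) : HasFPFInv G := by
  have hmap : ∀ u : V, ∃ u', Φ (Sum.inl (Sum.inl u)) = Sum.inl (Sum.inl u') := by
    intro u
    have hp : PP (L := L) (Sum.inl (Sum.inl u)) := (PP_iff hconn hV hk _).mpr ⟨u, rfl⟩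
    have h2 := PP_map Φ _ hp
    obtain ⟨u', hu'⟩ := (PP_iff hconn hV hk _).mp h2
    exact ⟨u', hu'⟩
  set φ0 : V → V := fun u => (hmap u).choose with hφ0
  have hspec : ∀ u, Φ (Sum.inl (Sum.inl u)) = Sum.inl (Sum.inl (φ0 u)) :=
    fun u => (hmap u).choose_spec
  have hinv0 : ∀ u, φ0 (φ0 u) = u := by
    intro u
    have h := hinv (Sum.inl (Sum.inl u))
    rw [hspec u, hspec (φ0 u)] at h
    exact Sum.inl_injective (Sum.inl_injective h)
  have hadj0 : ∀ {u v : V}, G.Adj u v → G.Adj (φ0 u) (φ0 v) := by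
    intro u v h
    obtain ⟨w, hw⟩ := walk_adj (L := L) hk h
    have hne : φ0 v ≠ φ0 u := by
      intro hc
      have h2 : Φ (Sum.inl (Sum.inl v)) = Φ (Sum.inl (Sum.inl u)) := by
        rw [hspec, hspec, hc]
      have := Sum.inl_injective (Sum.inl_injective (Φ.toEquiv.injective h2))
      exact h.ne' this
    by_contra hnadj
    have hb := walk_ge_nonadj hne hnadj ((w.map Φ.toHom).copy (hspec u) (hspec v))
    rw [SimpleGraph.Walk.length_copy, SimpleGraph.Walk.length_map, hw] at hb
    omega
  refine ⟨⟨⟨φ0, φ0, hinv0, hinv0⟩, ?_⟩, hinv0, ?_⟩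
  · intro a b
    constructor
    · intro h
      have h2 := hadj0 h
      rwa [hinv0, hinv0] at h2
    · exact hadj0
  · intro u hc
    have hc' : φ0 u = u := hc
    have := hspec u
    rw [hc'] at this
    exact hfpf _ this


lemma sym2_eq_inf_sup {W : Type} [LinearOrder W] (z : Sym2 W) :
    z = s(Sym2.inf z, Sym2.sup z) := by
  obtain ⟨a, b, rfl⟩ : ∃ a b, z = s(a,b) := by
    induction z using Sym2.ind with
    | _ a b => exact ⟨a, b, rfl⟩
  rcases sym2_inf_sup a b with ⟨h1, h2⟩ | ⟨h1, h2⟩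
  · rw [h1, h2]
  · rw [h1, h2]; exact Sym2.eq_swap

/-- image of an edge of `G` under an automorphism -/
noncomputable def phiE (φ : G ≃g G) : G.edgeSet → G.edgeSet := fun e =>
  ⟨Sym2.map φ (e : Sym2 V), by
    obtain ⟨a, b, hab⟩ := sym2_rep (e : Sym2 V)
    have he := e.prop
    rw [hab, SimpleGraph.mem_edgeSet] at he
    rw [hab, Sym2.map_pair_eq, SimpleGraph.mem_edgeSet]
    exact φ.map_adj_iff.mpr he⟩

lemma phiE_inv {φ : G ≃g G} (hinv : ∀ v, φ (φ v) = v) (e : G.edgeSet) :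
    phiE φ (phiE φ e) = e := by
  apply Subtype.ext
  show Sym2.map φ (Sym2.map φ (e : Sym2 V)) = (e : Sym2 V)
  obtain ⟨a, b, hab⟩ := sym2_rep (e : Sym2 V)
  rw [hab, Sym2.map_pair_eq, Sym2.map_pair_eq, hinv a, hinv b]

lemma mem_phiE {φ : G ≃g G} {u : V} {e : G.edgeSet} (h : u ∈ (e : Sym2 V)) :
    φ u ∈ (phiE φ e : Sym2 V) := Sym2.mem_map.mpr ⟨u, h, rfl⟩

open Classical in
noncomputable def psi (φ : G ≃g G) : (V ⊕ (G.edgeSet × Bool)) → (V ⊕ (G.edgeSet × Bool))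
  | Sum.inl u => Sum.inl (φ u)
  | Sum.inr (e,i) => Sum.inr (phiE φ e, if phiE φ e = e then !i else i)

lemma psi_inv {φ : G ≃g G} (hinv : ∀ v, φ (φ v) = v) :
    ∀ w, psi φ (psi φ w) = w := by
  intro w
  match w with
  | Sum.inl u => simp [psi, hinv u]
  | Sum.inr (e,i) =>
      by_cases he : phiE φ e = e
      · simp [psi, he, Bool.not_not]
      · have hee : phiE φ (phiE φ e) = e := phiE_inv hinv e
        have hne2 : ¬ (phiE φ (phiE φ e) = phiE φ e) := by
          rw [hee]; exact fun hx => he hx.symm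
        simp [psi, if_neg he, if_neg hne2, hee]

lemma psi_fpf {φ : G ≃g G} (hfpf : ∀ v, φ v ≠ v) : ∀ w, psi φ w ≠ w := by
  intro w
  match w with
  | Sum.inl u =>
      simp only [psi, ne_eq, Sum.inl.injEq]
      exact hfpf u
  | Sum.inr (e,i) =>
      intro hq
      have hp := Sum.inr_injective hq
      have h1 : phiE φ e = e := congrArg Prod.fst hp
      have h2 := congrArg Prod.snd hp
      simp only at h2
      rw [if_pos h1] at h2
      simp at h2

lemma psi_adj {φ : G ≃g G} {x y : V ⊕ (G.edgeSet × Bool)}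
    (h : (bipartiteConstruction G).Adj x y) :
    (bipartiteConstruction G).Adj (psi φ x) (psi φ y) := by
  rcases bc_adj.mp h with ⟨u,e,i,hm,⟨rfl,rfl⟩|⟨rfl,rfl⟩⟩
  · simp only [psi]
    exact bc_adj'.mpr (mem_phiE hm)
  · simp only [psi]
    exact (bc_adj'.mpr (mem_phiE hm)).symm

noncomputable def psiE (φ : G ≃g G) :
    (bipartiteConstruction G).edgeSet → (bipartiteConstruction G).edgeSet := fun f =>
  ⟨Sym2.map (psi φ) (f : Sym2 (V ⊕ (G.edgeSet × Bool))), by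
    obtain ⟨a, b, hab⟩ : ∃ a b, (f : Sym2 (V ⊕ (G.edgeSet × Bool))) = s(a,b) := by
      obtain ⟨z, hz⟩ := f
      induction z using Sym2.ind with
      | _ a b => exact ⟨a, b, rfl⟩
    have hf := f.prop
    rw [hab, SimpleGraph.mem_edgeSet] at hf
    rw [hab, Sym2.map_pair_eq, SimpleGraph.mem_edgeSet]
    exact psi_adj hf⟩

lemma psiE_inv {φ : G ≃g G} (hinv : ∀ v, φ (φ v) = v) (f : (bipartiteConstruction G).edgeSet) :
    psiE φ (psiE φ f) = f := by
  apply Subtype.ext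
  show Sym2.map (psi φ) (Sym2.map (psi φ) (f : Sym2 _)) = (f : Sym2 _)
  obtain ⟨a, b, hab⟩ : ∃ a b, (f : Sym2 (V ⊕ (G.edgeSet × Bool))) = s(a,b) := by
    obtain ⟨z, hz⟩ := f
    induction z using Sym2.ind with
    | _ a b => exact ⟨a, b, rfl⟩
  rw [hab, Sym2.map_pair_eq, Sym2.map_pair_eq, psi_inv hinv a, psi_inv hinv b]

lemma psi_injective {φ : G ≃g G} (hinv : ∀ v, φ (φ v) = v) :
    Function.Injective (psi φ) := by
  intro a b h
  have := congrArg (psi φ) h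
  rwa [psi_inv hinv, psi_inv hinv] at this

lemma inf_ne_sup (f : (bipartiteConstruction G).edgeSet) :
    Sym2.inf (f : Sym2 (V ⊕ (G.edgeSet × Bool))) ≠
    Sym2.sup (f : Sym2 (V ⊕ (G.edgeSet × Bool))) := by
  intro h
  have hd := SimpleGraph.not_isDiag_of_mem_edgeSet _ f.prop
  apply hd
  rw [sym2_eq_inf_sup (f : Sym2 (V ⊕ (G.edgeSet × Bool)))]
  exact Sym2.mk_isDiag_iff.mpr h

/-- the orientation flag of an edge under the induced map -/
def OrFlag (φ : G ≃g G) (f : (bipartiteConstruction G).edgeSet) : Prop :=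
  Sym2.inf ((psiE φ f : Sym2 (V ⊕ (G.edgeSet × Bool)))) =
    psi φ (Sym2.inf (f : Sym2 (V ⊕ (G.edgeSet × Bool))))

lemma psiE_inf_sup (φ : G ≃g G) (f : (bipartiteConstruction G).edgeSet) :
    (Sym2.inf ((psiE φ f : Sym2 (V ⊕ (G.edgeSet × Bool)))) = psi φ (Sym2.inf (f : Sym2 _)) ∧
     Sym2.sup ((psiE φ f : Sym2 (V ⊕ (G.edgeSet × Bool)))) = psi φ (Sym2.sup (f : Sym2 _))) ∨
    (Sym2.inf ((psiE φ f : Sym2 (V ⊕ (G.edgeSet × Bool)))) = psi φ (Sym2.sup (f : Sym2 _)) ∧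
     Sym2.sup ((psiE φ f : Sym2 (V ⊕ (G.edgeSet × Bool)))) = psi φ (Sym2.inf (f : Sym2 _))) := by
  have hval : (psiE φ f : Sym2 (V ⊕ (G.edgeSet × Bool))) =
      s(psi φ (Sym2.inf (f : Sym2 _)), psi φ (Sym2.sup (f : Sym2 _))) := by
    show Sym2.map (psi φ) (f : Sym2 _) = _
    conv_lhs => rw [sym2_eq_inf_sup (f : Sym2 (V ⊕ (G.edgeSet × Bool)))]
    rw [Sym2.map_pair_eq]
  have h := sym2_inf_sup (psi φ (Sym2.inf (f : Sym2 (V ⊕ (G.edgeSet × Bool)))))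
    (psi φ (Sym2.sup (f : Sym2 (V ⊕ (G.edgeSet × Bool)))))
  rw [← hval] at h
  exact h

lemma or_sup {φ : G ≃g G} (hinv : ∀ v, φ (φ v) = v) {f : (bipartiteConstruction G).edgeSet}
    (h : OrFlag φ f) :
    Sym2.sup ((psiE φ f : Sym2 (V ⊕ (G.edgeSet × Bool)))) =
      psi φ (Sym2.sup (f : Sym2 (V ⊕ (G.edgeSet × Bool)))) := by
  rcases psiE_inf_sup φ f with ⟨h1, h2⟩ | ⟨h1, h2⟩
  · exact h2
  · exfalso
    apply inf_ne_sup f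
    exact psi_injective hinv ((h.symm.trans h1).symm).symm

lemma not_or {φ : G ≃g G} {f : (bipartiteConstruction G).edgeSet}
    (h : ¬ OrFlag φ f) :
    Sym2.inf ((psiE φ f : Sym2 (V ⊕ (G.edgeSet × Bool)))) =
      psi φ (Sym2.sup (f : Sym2 (V ⊕ (G.edgeSet × Bool)))) ∧
    Sym2.sup ((psiE φ f : Sym2 (V ⊕ (G.edgeSet × Bool)))) =
      psi φ (Sym2.inf (f : Sym2 (V ⊕ (G.edgeSet × Bool)))) := by
  rcases psiE_inf_sup φ f with ⟨h1, h2⟩ | ⟨h1, h2⟩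
  · exact absurd h1 h
  · exact ⟨h1, h2⟩

lemma or_psiE {φ : G ≃g G} (hinv : ∀ v, φ (φ v) = v) {f : (bipartiteConstruction G).edgeSet}
    (h : OrFlag φ f) : OrFlag φ (psiE φ f) := by
  rw [OrFlag, psiE_inv hinv, h, psi_inv hinv]

lemma not_or_psiE {φ : G ≃g G} (hinv : ∀ v, φ (φ v) = v) {f : (bipartiteConstruction G).edgeSet}
    (h : ¬ OrFlag φ f) : ¬ OrFlag φ (psiE φ f) := by
  intro h2
  rw [OrFlag, psiE_inv hinv, (not_or h).1, psi_inv hinv] at h2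
  exact inf_ne_sup f h2

open Classical in
noncomputable def theta (φ : G ≃g G) :
    (V ⊕ (G.edgeSet × Bool)) ⊕ ((bipartiteConstruction G).edgeSet × Fin k) →
    (V ⊕ (G.edgeSet × Bool)) ⊕ ((bipartiteConstruction G).edgeSet × Fin k)
  | Sum.inl w => Sum.inl (psi φ w)
  | Sum.inr (f,j) => Sum.inr (psiE φ f, if OrFlag φ f then j else Fin.rev j)

lemma theta_inv {φ : G ≃g G} (hinv : ∀ v, φ (φ v) = v) :
    ∀ x, theta (k := k) φ (theta φ x) = x := by
  intro x
  match x with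
  | Sum.inl w => simp [theta, psi_inv hinv]
  | Sum.inr (f,j) =>
      by_cases ho : OrFlag φ f
      · simp [theta, if_pos ho, if_pos (or_psiE hinv ho), psiE_inv hinv]
      · simp [theta, if_neg ho, if_neg (not_or_psiE hinv ho), psiE_inv hinv, Fin.rev_rev]

lemma psiE_ne {φ : G ≃g G} (hfpf : ∀ v, φ v ≠ v) (f : (bipartiteConstruction G).edgeSet) :
    psiE φ f ≠ f := by
  intro h
  have hval : Sym2.map (psi φ) (f : Sym2 (V ⊕ (G.edgeSet × Bool))) = (f : Sym2 _) :=
    congrArg Subtype.val h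
  rw [f_eq f, Sym2.map_pair_eq] at hval
  rw [Sym2.eq_iff] at hval
  rcases hval with ⟨h1, h2⟩ | ⟨h1, h2⟩
  · exact psi_fpf hfpf _ h1
  · simp [psi] at h1

lemma theta_fpf {φ : G ≃g G} (hfpf : ∀ v, φ v ≠ v) :
    ∀ x, theta (k := k) φ x ≠ x := by
  intro x
  match x with
  | Sum.inl w =>
      simp only [theta, ne_eq, Sum.inl.injEq]
      exact psi_fpf hfpf w
  | Sum.inr (f,j) =>
      intro hq
      have hp := Sum.inr_injective hq
      exact psiE_ne hfpf f (congrArg Prod.fst hp)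

lemma theta_adj {φ : G ≃g G} (hinv : ∀ v, φ (φ v) = v)
    {x y : (V ⊕ (G.edgeSet × Bool)) ⊕ ((bipartiteConstruction G).edgeSet × Fin k)}
    (h : (kSubdivision L k (bipartiteConstruction G)).Adj x y) :
    (kSubdivision L k (bipartiteConstruction G)).Adj (theta φ x) (theta φ y) := by
  obtain ⟨hne, hR⟩ := ks_adj.mp h
  have hne' : theta (k := k) φ x ≠ theta φ y := by
    intro hc
    exact hne (by rw [← theta_inv hinv x, ← theta_inv hinv y, hc])
  have key : ∀ a b : (V ⊕ (G.edgeSet × Bool)) ⊕ ((bipartiteConstruction G).edgeSet × Fin k),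
      KRel k a b → KRel k (theta φ a) (theta φ b) ∨ KRel k (theta φ b) (theta φ a) := by
    rintro a b (⟨f,j,rfl,rfl,hj⟩ | ⟨f,j,rfl,rfl,hj⟩ | ⟨f,i,j,rfl,rfl,hj⟩)
    · have hjk := j.isLt
      by_cases ho : OrFlag φ f
      · refine Or.inl (Or.inl ⟨psiE φ f, j, ?_, ?_, hj⟩)
        · simp only [theta]
          rw [ho]
        · simp only [theta, if_pos ho]
      · refine Or.inl (Or.inr (Or.inl ⟨psiE φ f, Fin.rev j, ?_, ?_, ?_⟩))
        · simp only [theta]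
          rw [(not_or ho).2]
        · simp only [theta, if_neg ho]
        · rw [Fin.val_rev]; omega
    · have hjk := j.isLt
      by_cases ho : OrFlag φ f
      · refine Or.inl (Or.inr (Or.inl ⟨psiE φ f, j, ?_, ?_, hj⟩))
        · simp only [theta]
          rw [or_sup hinv ho]
        · simp only [theta, if_pos ho]
      · refine Or.inl (Or.inl ⟨psiE φ f, Fin.rev j, ?_, ?_, ?_⟩)
        · simp only [theta]
          rw [(not_or ho).1]
        · simp only [theta, if_neg ho]
        · rw [Fin.val_rev]; omega
    · have hik := i.isLt
      have hjk := j.isLt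
      by_cases ho : OrFlag φ f
      · refine Or.inl (Or.inr (Or.inr ⟨psiE φ f, i, j, ?_, ?_, hj⟩)) <;>
          simp only [theta, if_pos ho]
      · refine Or.inr (Or.inr (Or.inr ⟨psiE φ f, Fin.rev j, Fin.rev i, ?_, ?_, ?_⟩))
        · simp only [theta, if_neg ho]
        · simp only [theta, if_neg ho]
        · rw [Fin.val_rev, Fin.val_rev]; omega
  refine ks_adj.mpr ⟨hne', ?_⟩
  rcases hR with hR | hR
  · exact key x y hR
  · exact (key y x hR).symm

lemma backward (hk : 1 ≤ k) (h : HasFPFInv G) :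
    HasFPFInv (kSubdivision L k (bipartiteConstruction G)) := by
  obtain ⟨φ, hinv, hfpf⟩ := h
  refine ⟨⟨⟨theta φ, theta φ, theta_inv hinv, theta_inv hinv⟩, ?_⟩,
    theta_inv hinv, theta_fpf hfpf⟩
  intro a b
  show (kSubdivision L k (bipartiteConstruction G)).Adj (theta φ a) (theta φ b) ↔
    (kSubdivision L k (bipartiteConstruction G)).Adj a b
  constructor
  · intro h2
    have h3 := theta_adj hinv h2
    rwa [theta_inv hinv, theta_inv hinv] at h3
  · exact theta_adj hinv

end
end FPF19

/-- for a connected finite simple graph `G` with at least 3 vertices and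
any `k ≥ 1`, the `k`-subdivision of the bipartite construction of `G` admits a fixed
point free involution iff `G` does. -/
theorem kSubdivision_bipartite_fpfInv_iff {V : Type} [Fintype V] (G : SimpleGraph V)
    (hconn : G.Connected) (hV : 3 ≤ Fintype.card V) (k : ℕ) (hk : 1 ≤ k)
    (L : LinearOrder (V ⊕ (G.edgeSet × Bool))) :
    HasFPFInv (kSubdivision L k (bipartiteConstruction G)) ↔ HasFPFInv G := by
  letI := L
  constructor
  · rintro ⟨Φ, hinv, hfpf⟩
    exact FPF19.forward hconn hV hk Φ hinv hfpf
  · exact FPF19.backward hk
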